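/- arXiv:1202.1208 — 4 statements merged into one kernel-verified Lean document; each statement's English description precedes it below -/
import Mathlib

section
/- Let R : V ⇝ V be a linear relation on a module with associated submodules K±, D±, D = D₋ ∩ D₊ as above. The natural inclusion induces a canonical isomorphism of modules D/((K₋+K₊) ∩ D) ≅ ((K₋+D₊) ∩ (D₋+K₊))/(K₋+K₊). -/
/-!
Extending a finite chain by zeros shows `K₊ ≤ D₊` and `K₋ ≤ D₋`. In a modular lattice these two
inclusions give `(K₋ ⊔ D₊) ⊓ (D₋ ⊔ K₊) = D ⊔ (K₋ ⊔ K₊)`, and the isomorphism is then the second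
isomorphism theorem `D / (K ⊓ D) ≅ (D ⊔ K) / K` for `K = K₋ ⊔ K₊`.
-/

variable {A V : Type*} [CommRing A] [AddCommGroup V] [Module A V]

/-- `K₊`: elements admitting a finite forward `R`-chain ending at `0`:
`v R v₁ R v₂ R ⋯ R v_k R 0`. -/
def KplusSet (R : Submodule A (V × V)) : Set V :=
  {v | ∃ (n : ℕ) (c : ℕ → V), c 0 = v ∧ c (n + 1) = 0 ∧ ∀ i ≤ n, (c i, c (i + 1)) ∈ R}

/-- `K₋`: elements reached from `0` by a finite forward `R`-chain:
`0 R v_{-k} R ⋯ R v_{-1} R v`. -/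
def KminusSet (R : Submodule A (V × V)) : Set V :=
  {v | ∃ (n : ℕ) (c : ℕ → V), c 0 = 0 ∧ c (n + 1) = v ∧ ∀ i ≤ n, (c i, c (i + 1)) ∈ R}

/-- `D₊`: elements admitting an infinite forward `R`-chain `v R v₁ R v₂ R ⋯`. -/
def DplusSet (R : Submodule A (V × V)) : Set V :=
  {v | ∃ c : ℕ → V, c 0 = v ∧ ∀ i, (c i, c (i + 1)) ∈ R}

/-- `D₋`: elements admitting an infinite backward `R`-chain `⋯ R v₂ R v₁ R v`. -/
def DminusSet (R : Submodule A (V × V)) : Set V :=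
  {v | ∃ c : ℕ → V, c 0 = v ∧ ∀ i, (c (i + 1), c i) ∈ R}

theorem exists_chain_of_chain_to_loop {α : Type*} {r : α → α → Prop} {z : α} (hz : r z z)
    {n : ℕ} {c : ℕ → α} (hn : c (n + 1) = z) (hc : ∀ i ≤ n, r (c i) (c (i + 1))) :
    ∃ d : ℕ → α, d 0 = c 0 ∧ ∀ i, r (d i) (d (i + 1)) := by
  refine ⟨fun i => if i ≤ n + 1 then c i else z, by simp, fun i => ?_⟩
  by_cases hi : i ≤ n
  · simpa [hi, show i ≤ n + 1 by omega] using hc i hi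
  · rcases (show i = n + 1 ∨ n + 1 < i by omega) with rfl | hlt
    · simpa [hn] using hz
    · simpa [show ¬i ≤ n + 1 by omega, show ¬i + 1 ≤ n + 1 by omega] using hz

theorem KplusSet_subset_DplusSet (R : Submodule A (V × V)) : KplusSet R ⊆ DplusSet R := by
  rintro v ⟨n, c, rfl, hn, hc⟩
  exact exists_chain_of_chain_to_loop (r := fun x y => (x, y) ∈ R) R.zero_mem hn hc

theorem KminusSet_subset_DminusSet (R : Submodule A (V × V)) : KminusSet R ⊆ DminusSet R := by
  rintro v ⟨n, c, h0, rfl, hc⟩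
  have hrev : ∀ i ≤ n, (c (n + 1 - (i + 1)), c (n + 1 - i)) ∈ R := fun i hi => by
    rw [show n + 1 - (i + 1) = n - i by omega, show n + 1 - i = n - i + 1 by omega]
    exact hc (n - i) (by omega)
  exact exists_chain_of_chain_to_loop (r := fun x y => (y, x) ∈ R)
    (c := fun i => c (n + 1 - i)) R.zero_mem (by simpa using h0) hrev

theorem inf_sup_eq_sup_of_le_of_le {α : Type*} [Lattice α] [IsModularLattice α] {km kp dm dp : α}
    (hm : km ≤ dm) (hp : kp ≤ dp) : (km ⊔ dp) ⊓ (dm ⊔ kp) = dm ⊓ dp ⊔ (km ⊔ kp) := by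
  rw [sup_inf_assoc_of_le _ (le_sup_of_le_left hm), sup_comm dm, inf_comm,
    sup_inf_assoc_of_le _ hp]
  ac_rfl

theorem Submodule.exists_quotient_equiv_of_sup_eq {D K M : Submodule A V} (hDM : D ≤ M)
    (hM : D ⊔ K = M) :
    ∃ e : (D ⧸ (K ⊓ D).comap D.subtype) ≃ₗ[A] (M ⧸ K.comap M.subtype),
      ∀ x : D, e (Submodule.Quotient.mk x) = Submodule.Quotient.mk (Submodule.inclusion hDM x) := by
  subst hM
  refine ⟨(Submodule.quotEquivOfEq _ _ ?_).trans (LinearMap.quotientInfEquivSupQuotient D K),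
    fun x => rfl⟩
  simp [inf_comm]

/-- For a linear relation `R : V ⇝ V` on a module, with submodules `K₋, K₊, D₋, D₊` as above
and `D = D₋ ⊓ D₊`, the natural inclusion induces an isomorphism
`D / ((K₋ + K₊) ⊓ D) ≅ ((K₋ + D₊) ⊓ (D₋ + K₊)) / (K₋ + K₊)`. -/
theorem stmt4 (R : Submodule A (V × V)) (Km Kp Dm Dp : Submodule A V)
    (hKm : (Km : Set V) = KminusSet R) (hKp : (Kp : Set V) = KplusSet R)
    (hDm : (Dm : Set V) = DminusSet R) (hDp : (Dp : Set V) = DplusSet R) :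
    ∃ e : (↥(Dm ⊓ Dp) ⧸ ((Km ⊔ Kp) ⊓ (Dm ⊓ Dp)).comap (Dm ⊓ Dp).subtype) ≃ₗ[A]
        (↥((Km ⊔ Dp) ⊓ (Dm ⊔ Kp)) ⧸ (Km ⊔ Kp).comap ((Km ⊔ Dp) ⊓ (Dm ⊔ Kp)).subtype),
      ∀ x : ↥(Dm ⊓ Dp),
        e (Submodule.Quotient.mk x) =
          Submodule.Quotient.mk (Submodule.inclusion
            (le_inf (inf_le_right.trans le_sup_right) (inf_le_left.trans le_sup_left)) x) := by
  have hKmDm : Km ≤ Dm := SetLike.coe_subset_coe.mp <| by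
    rw [hKm, hDm]; exact KminusSet_subset_DminusSet R
  have hKpDp : Kp ≤ Dp := SetLike.coe_subset_coe.mp <| by
    rw [hKp, hDp]; exact KplusSet_subset_DplusSet R
  exact Submodule.exists_quotient_equiv_of_sup_eq _
    (inf_sup_eq_sup_of_le_of_le hKmDm hKpDp).symm
end

section
/- Let R : V ⇝ V be a linear relation on a module, and set V_reg = D/((K₋+K₊) ∩ D). The induced relation R_reg on V_reg, defined by declaring two classes related iff they admit representatives in D related by R, is (the graph of) a module isomorphism of V_reg. -/
/-!
An infinite chain through `v` can be prolonged or shortened by one step, so every element of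
`D = D₋ ⊓ D₊` has an `R`-successor and an `R`-predecessor in `D`: the induced relation on `V_reg`
is total and surjective. Moving an element of `K₊` one step forward (or of `K₋` one step back) stays
inside `K₊` (resp. `K₋`), so by linearity of `R` the submodule `K₋ + K₊` is invariant under `R` in
both directions. Applied to differences of related pairs, this says two related pairs have
congruent first components iff they have congruent second components, so the induced relation is
the graph of a bijective linear map.
-/

variable {A V : Type*} [CommRing A] [AddCommGroup V] [Module A V]

section Chains

variable {R : Submodule A (V × V)} {v w : V}

theorem zero_mem_KplusSet : (0 : V) ∈ KplusSet R :=
  ⟨0, 0, rfl, rfl, fun _ _ => R.zero_mem⟩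

theorem zero_mem_KminusSet : (0 : V) ∈ KminusSet R :=
  ⟨0, 0, rfl, rfl, fun _ _ => R.zero_mem⟩

theorem exists_rel_mem_KplusSet (hv : v ∈ KplusSet R) : ∃ w ∈ KplusSet R, (v, w) ∈ R := by
  obtain ⟨n, c, rfl, hn, hc⟩ := hv
  refine ⟨c 1, ?_, hc 0 n.zero_le⟩
  cases n with
  | zero => exact hn ▸ zero_mem_KplusSet
  | succ n => exact ⟨n, fun i => c (i + 1), rfl, hn, fun i hi => hc (i + 1) (by omega)⟩

theorem exists_rel_mem_KminusSet (hw : w ∈ KminusSet R) : ∃ v ∈ KminusSet R, (v, w) ∈ R := by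
  obtain ⟨n, c, h0, rfl, hc⟩ := hw
  refine ⟨c n, ?_, hc n le_rfl⟩
  cases n with
  | zero => exact h0 ▸ zero_mem_KminusSet
  | succ n => exact ⟨n, c, h0, rfl, fun i hi => hc i (by omega)⟩

theorem mem_KplusSet_of_rel (hw : w ∈ KplusSet R) (h : (v, w) ∈ R) : v ∈ KplusSet R := by
  obtain ⟨n, c, rfl, hn, hc⟩ := hw
  refine ⟨n + 1, fun | 0 => v | i + 1 => c i, rfl, hn, fun i hi => ?_⟩
  cases i with
  | zero => exact h
  | succ i => exact hc i (by omega)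

theorem mem_KminusSet_of_rel (hv : v ∈ KminusSet R) (h : (v, w) ∈ R) : w ∈ KminusSet R := by
  obtain ⟨n, c, h0, rfl, hc⟩ := hv
  refine ⟨n + 1, Function.update c (n + 2) w, by simp [h0], by simp, fun i hi => ?_⟩
  rcases Nat.lt_or_ge i (n + 1) with hi' | hi'
  · simpa [Function.update_of_ne (show i ≠ n + 2 by omega),
      Function.update_of_ne (show i + 1 ≠ n + 2 by omega)] using hc i (by omega)
  · obtain rfl : i = n + 1 := by omega
    simpa using h

theorem exists_rel_mem_DplusSet (hv : v ∈ DplusSet R) : ∃ w ∈ DplusSet R, (v, w) ∈ R := by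
  obtain ⟨c, rfl, hc⟩ := hv
  exact ⟨c 1, ⟨fun i => c (i + 1), rfl, fun i => hc (i + 1)⟩, hc 0⟩

theorem exists_rel_mem_DminusSet (hw : w ∈ DminusSet R) : ∃ v ∈ DminusSet R, (v, w) ∈ R := by
  obtain ⟨c, rfl, hc⟩ := hw
  exact ⟨c 1, ⟨fun i => c (i + 1), rfl, fun i => hc (i + 1)⟩, hc 0⟩

theorem mem_DplusSet_of_rel (hw : w ∈ DplusSet R) (h : (v, w) ∈ R) : v ∈ DplusSet R := by
  obtain ⟨c, rfl, hc⟩ := hw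
  refine ⟨fun | 0 => v | i + 1 => c i, rfl, fun i => ?_⟩
  cases i with
  | zero => exact h
  | succ i => exact hc i

theorem mem_DminusSet_of_rel (hv : v ∈ DminusSet R) (h : (v, w) ∈ R) : w ∈ DminusSet R := by
  obtain ⟨c, rfl, hc⟩ := hv
  refine ⟨fun | 0 => w | i + 1 => c i, rfl, fun i => ?_⟩
  cases i with
  | zero => exact h
  | succ i => exact hc i

end Chains

theorem mem_sup_iff_of_rel {R : Submodule A (V × V)} {Km Kp : Submodule A V}
    (hKm : (Km : Set V) = KminusSet R) (hKp : (Kp : Set V) = KplusSet R) {v w : V}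
    (h : (v, w) ∈ R) : v ∈ Km ⊔ Kp ↔ w ∈ Km ⊔ Kp := by
  have memKm (x : V) : x ∈ Km ↔ x ∈ KminusSet R := Set.ext_iff.1 hKm x
  have memKp (x : V) : x ∈ Kp ↔ x ∈ KplusSet R := Set.ext_iff.1 hKp x
  simp only [Submodule.mem_sup]
  constructor
  · rintro ⟨km, hkm, kp, hkp, rfl⟩
    obtain ⟨a, ha, hkpa⟩ := exists_rel_mem_KplusSet ((memKp kp).1 hkp)
    have hrel : (km, w - a) ∈ R := by simpa using R.sub_mem h hkpa
    exact ⟨w - a, (memKm _).2 (mem_KminusSet_of_rel ((memKm km).1 hkm) hrel), a, (memKp a).2 ha,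
      sub_add_cancel w a⟩
  · rintro ⟨km, hkm, kp, hkp, rfl⟩
    obtain ⟨a, ha, hakm⟩ := exists_rel_mem_KminusSet ((memKm km).1 hkm)
    have hrel : (v - a, kp) ∈ R := by simpa using R.sub_mem h hakm
    exact ⟨a, (memKm a).2 ha, v - a, (memKp _).2 (mem_KplusSet_of_rel ((memKp kp).1 hkp) hrel),
      add_sub_cancel a v⟩

theorem exists_linearEquiv_quotient_of_rel (R : Submodule A (V × V)) (D K : Submodule A V)
    (hsucc : ∀ d ∈ D, ∃ d' ∈ D, (d, d') ∈ R) (hpred : ∀ d' ∈ D, ∃ d ∈ D, (d, d') ∈ R)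
    (hK : ∀ d ∈ D, ∀ d' ∈ D, (d, d') ∈ R → (d ∈ K ↔ d' ∈ K)) :
    ∃ e : (D ⧸ (K ⊓ D).comap D.subtype) ≃ₗ[A] (D ⧸ (K ⊓ D).comap D.subtype),
      ∀ x y, ((∃ d d' : D, Submodule.Quotient.mk d = x ∧ Submodule.Quotient.mk d' = y ∧
        ((d : V), (d' : V)) ∈ R) ↔ e x = y) := by
  set N := (K ⊓ D).comap D.subtype
  have mk_eq_mk (d d' : D) : N.mkQ d = N.mkQ d' ↔ (d : V) - d' ∈ K := by
    rw [Submodule.mkQ_apply, Submodule.mkQ_apply, Submodule.Quotient.eq]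
    simp [N]
  let f := (N.mkQ.prodMap N.mkQ) ∘ₗ (R.comap (D.subtype.prodMap D.subtype)).subtype
  have hfst : Function.Surjective (Prod.fst ∘ f) := fun x => by
    obtain ⟨d, rfl⟩ := N.mkQ_surjective x
    obtain ⟨d', hd', hdd'⟩ := hsucc d d.2
    exact ⟨⟨(d, ⟨d', hd'⟩), hdd'⟩, rfl⟩
  have hsnd : Function.Surjective (Prod.snd ∘ f) := fun y => by
    obtain ⟨d', rfl⟩ := N.mkQ_surjective y
    obtain ⟨d, hd, hdd'⟩ := hpred d' d'.2
    exact ⟨⟨(⟨d, hd⟩, d'), hdd'⟩, rfl⟩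
  have hfst_snd : ∀ g₁ g₂, (f g₁).1 = (f g₂).1 ↔ (f g₁).2 = (f g₂).2 := by
    rintro ⟨⟨d₁, d₁'⟩, h₁⟩ ⟨⟨d₂, d₂'⟩, h₂⟩
    simp only [f, LinearMap.comp_apply, Submodule.subtype_apply, LinearMap.prodMap_apply, mk_eq_mk]
    exact hK _ (D.sub_mem d₁.2 d₂.2) _ (D.sub_mem d₁'.2 d₂'.2) (R.sub_mem h₁ h₂)
  obtain ⟨e, he⟩ := f.exists_linearEquiv_eq_graph hfst hsnd hfst_snd
  refine ⟨e, fun x y => ?_⟩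
  have hxy : (x, y) ∈ LinearMap.range f ↔ e x = y := by
    rw [he, LinearMap.mem_graph_iff, eq_comm]
    rfl
  rw [← hxy]
  constructor
  · rintro ⟨d, d', rfl, rfl, h⟩
    exact ⟨⟨(d, d'), h⟩, rfl⟩
  · rintro ⟨⟨⟨d, d'⟩, h⟩, hf⟩
    exact ⟨d, d', congrArg Prod.fst hf, congrArg Prod.snd hf, h⟩

/-- For a linear relation `R : V ⇝ V` on a module, the induced relation `R_reg` on
`V_reg = D / ((K₋ + K₊) ⊓ D)` — two classes are related iff they have representatives in `D`
related by `R` — is the graph of a module isomorphism of `V_reg`. -/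
theorem stmt5 (R : Submodule A (V × V)) (Km Kp Dm Dp : Submodule A V)
    (hKm : (Km : Set V) = KminusSet R) (hKp : (Kp : Set V) = KplusSet R)
    (hDm : (Dm : Set V) = DminusSet R) (hDp : (Dp : Set V) = DplusSet R) :
    ∃ e : (↥(Dm ⊓ Dp) ⧸ ((Km ⊔ Kp) ⊓ (Dm ⊓ Dp)).comap (Dm ⊓ Dp).subtype) ≃ₗ[A]
        (↥(Dm ⊓ Dp) ⧸ ((Km ⊔ Kp) ⊓ (Dm ⊓ Dp)).comap (Dm ⊓ Dp).subtype),
      ∀ x y : (↥(Dm ⊓ Dp) ⧸ ((Km ⊔ Kp) ⊓ (Dm ⊓ Dp)).comap (Dm ⊓ Dp).subtype),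
        ((∃ d d' : ↥(Dm ⊓ Dp), Submodule.Quotient.mk d = x ∧ Submodule.Quotient.mk d' = y ∧
            ((d : V), (d' : V)) ∈ R) ↔ e x = y) := by
  have memD (v : V) : v ∈ Dm ⊓ Dp ↔ v ∈ DminusSet R ∧ v ∈ DplusSet R := by
    rw [Submodule.mem_inf, ← SetLike.mem_coe, hDm, ← SetLike.mem_coe, hDp]
  apply exists_linearEquiv_quotient_of_rel
  · intro v hv
    obtain ⟨hvm, hvp⟩ := (memD v).1 hv
    obtain ⟨w, hwp, hvw⟩ := exists_rel_mem_DplusSet hvp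
    exact ⟨w, (memD w).2 ⟨mem_DminusSet_of_rel hvm hvw, hwp⟩, hvw⟩
  · intro w hw
    obtain ⟨hwm, hwp⟩ := (memD w).1 hw
    obtain ⟨v, hvm, hvw⟩ := exists_rel_mem_DminusSet hwm
    exact ⟨v, (memD v).2 ⟨hvm, mem_DplusSet_of_rel hwp hvw⟩, hvw⟩
  · exact fun _ _ _ _ => mem_sup_iff_of_rel hKm hKp
end

section
/- Let R : V ⇝ V be a linear relation on a finite-dimensional vector space. For every k ≥ 0, the relation induced by the k-fold composite R^k on the quotient D₊/K₊ (via the inclusion D₊ ⊆ V and projection D₊ → D₊/K₊) is a linear isomorphism of D₊/K₊. -/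
/-!
The relation `S` induced by `R^k` on `W = D₊/K₊` is total, since every element of `D₊` has an
`R^k`-successor in `D₊`, and it has trivial kernel, since an element whose `R^k`-successor lies
in `K₊` lies in `K₊` itself. In finite dimension this forces it to be the graph of an
isomorphism: its first projection is surjective and its second is injective, so
`dim W ≤ dim S ≤ dim W`, and both projections are isomorphisms.
-/

variable {A V : Type*} [CommRing A] [AddCommGroup V] [Module A V]

/-- Composition of linear relations: `v (rcomp R S) u` iff `∃ w, v R w` and `w S u`. -/
def rcomp {A V W U : Type*} [CommRing A] [AddCommGroup V] [Module A V]
    [AddCommGroup W] [Module A W] [AddCommGroup U] [Module A U]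
    (R : Submodule A (V × W)) (S : Submodule A (W × U)) : Submodule A (V × U) where
  carrier := {p | ∃ w, (p.1, w) ∈ R ∧ (w, p.2) ∈ S}
  add_mem' := by
    rintro a b ⟨w1, h1, h1'⟩ ⟨w2, h2, h2'⟩
    exact ⟨w1 + w2, R.add_mem h1 h2, S.add_mem h1' h2'⟩
  zero_mem' := ⟨0, R.zero_mem, S.zero_mem⟩
  smul_mem' := by
    rintro c a ⟨w, h, h'⟩
    exact ⟨c • w, R.smul_mem c h, S.smul_mem c h'⟩

/-- The `k`-fold composition `R^k` of a linear relation `R : V ⇝ V` with itself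
(`R^0` is the identity relation). -/
def relPow {A V : Type*} [CommRing A] [AddCommGroup V] [Module A V]
    (R : Submodule A (V × V)) : ℕ → Submodule A (V × V)
  | 0 => LinearMap.graph (LinearMap.id : V →ₗ[A] V)
  | n + 1 => rcomp (relPow R n) R

section LinearRelation

variable {K W : Type*} [Field K] [AddCommGroup W] [Module K W] [FiniteDimensional K W]

theorem Submodule.exists_linearEquiv_mem_iff_of_total_of_injective (S : Submodule K (W × W))
    (htotal : ∀ x, ∃ y, (x, y) ∈ S) (hinj : ∀ x, (x, 0) ∈ S → x = 0) :
    ∃ e : W ≃ₗ[K] W, ∀ x y, (x, y) ∈ S ↔ e x = y := by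
  let g₁ : S →ₗ[K] W := LinearMap.fst K W W ∘ₗ S.subtype
  let g₂ : S →ₗ[K] W := LinearMap.snd K W W ∘ₗ S.subtype
  have hg₁ : Function.Surjective g₁ := fun x ↦
    let ⟨y, hy⟩ := htotal x
    ⟨⟨(x, y), hy⟩, rfl⟩
  have hg₂ : Function.Injective g₂ := by
    refine (injective_iff_map_eq_zero g₂).2 fun ⟨⟨x, y⟩, hxy⟩ hy ↦ ?_
    obtain rfl : y = 0 := hy
    obtain rfl := hinj x hxy
    rfl
  have hrank : Module.finrank K S = Module.finrank K W :=
    le_antisymm (LinearMap.finrank_le_finrank_of_injective hg₂)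
      (LinearMap.finrank_le_finrank_of_surjective hg₁)
  let e₁ := LinearEquiv.ofBijective g₁
    ⟨(LinearMap.injective_iff_surjective_of_finrank_eq_finrank hrank).2 hg₁, hg₁⟩
  let e₂ := LinearEquiv.ofBijective g₂
    ⟨hg₂, (LinearMap.injective_iff_surjective_of_finrank_eq_finrank hrank).1 hg₂⟩
  refine ⟨e₁.symm ≪≫ₗ e₂, fun x y ↦ ⟨fun h ↦ ?_, fun h ↦ ?_⟩⟩
  · have : e₁.symm x = ⟨(x, y), h⟩ := e₁.symm_apply_eq.2 rfl
    rw [LinearEquiv.trans_apply, this]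
    rfl
  · have hx : ((e₁.symm x : S) : W × W) = (x, e₂ (e₁.symm x)) :=
      Prod.ext (e₁.apply_symm_apply x) rfl
    rw [← h, LinearEquiv.trans_apply, ← hx]
    exact (e₁.symm x).2

end LinearRelation

def inducedRel (T : Submodule A (V × V)) (D K : Submodule A V) :
    Submodule A ((D ⧸ K.comap D.subtype) × (D ⧸ K.comap D.subtype)) :=
  (T.comap (D.subtype.prodMap D.subtype)).map
    ((K.comap D.subtype).mkQ.prodMap (K.comap D.subtype).mkQ)

theorem mem_inducedRel {T : Submodule A (V × V)} {D K : Submodule A V}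
    {x y : D ⧸ K.comap D.subtype} :
    (x, y) ∈ inducedRel T D K ↔ ∃ d d' : D, Submodule.Quotient.mk d = x ∧
      Submodule.Quotient.mk d' = y ∧ ((d : V), (d' : V)) ∈ T := by
  constructor
  · rintro ⟨⟨d, d'⟩, hdd', hxy⟩
    obtain ⟨rfl, rfl⟩ := Prod.mk.inj hxy
    exact ⟨d, d', rfl, rfl, hdd'⟩
  · rintro ⟨d, d', rfl, rfl, hdd'⟩
    exact ⟨(d, d'), hdd', rfl⟩

theorem inducedRel_total {T : Submodule A (V × V)} {D K : Submodule A V}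
    (hT : ∀ v ∈ D, ∃ w ∈ D, (v, w) ∈ T) (x : D ⧸ K.comap D.subtype) :
    ∃ y, (x, y) ∈ inducedRel T D K := by
  obtain ⟨⟨v, hv⟩, rfl⟩ := Submodule.Quotient.mk_surjective _ x
  obtain ⟨w, hw, hvw⟩ := hT v hv
  exact ⟨Submodule.Quotient.mk ⟨w, hw⟩, mem_inducedRel.2 ⟨_, _, rfl, rfl, hvw⟩⟩

theorem inducedRel_injective {T : Submodule A (V × V)} {D K : Submodule A V}
    (hT : ∀ v w, (v, w) ∈ T → w ∈ K → v ∈ K) (x : D ⧸ K.comap D.subtype)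
    (hx : (x, 0) ∈ inducedRel T D K) : x = 0 := by
  obtain ⟨d, d', rfl, hd', hdd'⟩ := mem_inducedRel.1 hx
  exact (Submodule.Quotient.mk_eq_zero (K.comap D.subtype)).2
    (hT _ _ hdd' ((Submodule.Quotient.mk_eq_zero (K.comap D.subtype)).1 hd'))

theorem mem_relPow_succ {R : Submodule A (V × V)} {n : ℕ} {v w : V} :
    (v, w) ∈ relPow R (n + 1) ↔ ∃ u, (v, u) ∈ relPow R n ∧ (u, w) ∈ R :=
  Iff.rfl

theorem exists_mem_DplusSet_of_mem {R : Submodule A (V × V)} {v : V} (hv : v ∈ DplusSet R) :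
    ∃ w ∈ DplusSet R, (v, w) ∈ R := by
  obtain ⟨c, rfl, hc⟩ := hv
  exact ⟨c 1, ⟨fun i ↦ c (i + 1), rfl, fun i ↦ hc (i + 1)⟩, hc 0⟩

theorem exists_mem_DplusSet_relPow {R : Submodule A (V × V)} {v : V} (hv : v ∈ DplusSet R)
    (k : ℕ) : ∃ w ∈ DplusSet R, (v, w) ∈ relPow R k := by
  induction k with
  | zero => exact ⟨v, hv, (LinearMap.mem_graph_iff _ _).2 rfl⟩
  | succ n ih =>
    obtain ⟨u, hu, hvu⟩ := ih
    obtain ⟨w, hw, huw⟩ := exists_mem_DplusSet_of_mem hu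
    exact ⟨w, hw, mem_relPow_succ.2 ⟨u, hvu, huw⟩⟩

theorem mem_KplusSet_of_mem {R : Submodule A (V × V)} {v w : V} (hvw : (v, w) ∈ R)
    (hw : w ∈ KplusSet R) : v ∈ KplusSet R := by
  obtain ⟨n, c, rfl, hcn, hc⟩ := hw
  refine ⟨n + 1, fun | 0 => v | i + 1 => c i, rfl, hcn, ?_⟩
  rintro (_ | i) hi
  · exact hvw
  · exact hc i (by omega)

theorem mem_KplusSet_of_relPow {R : Submodule A (V × V)} {k : ℕ} {v w : V}
    (hvw : (v, w) ∈ relPow R k) (hw : w ∈ KplusSet R) : v ∈ KplusSet R := by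
  induction k generalizing w with
  | zero =>
    obtain rfl : w = v := (LinearMap.mem_graph_iff _ _).1 hvw
    exact hw
  | succ n ih =>
    obtain ⟨u, hvu, huw⟩ := mem_relPow_succ.1 hvw
    exact ih hvu (mem_KplusSet_of_mem huw hw)

/-- For a linear relation `R` on a finite-dimensional vector space and every `k ≥ 0`, the
relation induced by `R^k` on `D₊/K₊` is the graph of a linear isomorphism of `D₊/K₊`. -/
theorem stmt8 {κ V : Type*} [Field κ] [AddCommGroup V] [Module κ V] [FiniteDimensional κ V]
    (R : Submodule κ (V × V)) (Kp Dp : Submodule κ V)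
    (hKp : (Kp : Set V) = KplusSet R) (hDp : (Dp : Set V) = DplusSet R) (k : ℕ) :
    ∃ e : (↥Dp ⧸ Kp.comap Dp.subtype) ≃ₗ[κ] (↥Dp ⧸ Kp.comap Dp.subtype),
      ∀ x y : (↥Dp ⧸ Kp.comap Dp.subtype),
        ((∃ d d' : ↥Dp, Submodule.Quotient.mk d = x ∧ Submodule.Quotient.mk d' = y ∧
            ((d : V), (d' : V)) ∈ relPow R k) ↔ e x = y) := by
  have hK : ∀ v, v ∈ Kp ↔ v ∈ KplusSet R := fun v ↦ Set.ext_iff.1 hKp v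
  have hD : ∀ v, v ∈ Dp ↔ v ∈ DplusSet R := fun v ↦ Set.ext_iff.1 hDp v
  have htotal : ∀ v ∈ Dp, ∃ w ∈ Dp, (v, w) ∈ relPow R k := fun v hv ↦ by
    simpa only [hD] using exists_mem_DplusSet_relPow ((hD v).1 hv) k
  have hinj : ∀ v w, (v, w) ∈ relPow R k → w ∈ Kp → v ∈ Kp := fun v w hvw hw ↦
    (hK v).2 (mem_KplusSet_of_relPow hvw ((hK w).1 hw))
  obtain ⟨e, he⟩ :=
    (inducedRel (relPow R k) Dp Kp).exists_linearEquiv_mem_iff_of_total_of_injective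
      (inducedRel_total htotal) (inducedRel_injective hinj)
  exact ⟨e, fun x y ↦ mem_inducedRel.symm.trans (he x y)⟩
end

section
/- For the Jordan cell representation ρ^{II}(λ,k) of G_{2m} (the regular representation with monodromy the k×k Jordan block T(λ,k) with eigenvalue λ ≠ 0), one has dim ker M(ρ^{II}(λ,k)) = dim coker M(ρ^{II}(λ,k)) = 1 if λ = 1 and = 0 if λ ≠ 1. -/
/-! A family `v` lies in the kernel of `M(ρ)` exactly when it is constant with value a
fixed vector of the monodromy `T(λ,k)`, so `ker M ≅ ker (T(λ,k) - 1) = ker T(λ-1,k)`. For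
`λ = 1` this is the kernel of the nilpotent shift, spanned by the first basis vector; for
`λ ≠ 1` it is zero since `det T(λ-1,k) = (λ-1)^k ≠ 0`. Since `M` is an endomorphism of a
finite-dimensional space, its cokernel has the same dimension as its kernel. -/

/-- The block matrix `M(ρ)` of a `G_{2m}`-representation: it sends a family
`(v_{2i-1})_i` of odd-vertex vectors to the family `(α_i (v_{2i-1}) - β_i (v_{2i+1}))_i`
(cyclic indexing). Here `U i` models the odd vertex `V_{2i-1}` (actually `V_{2i+1}`
re-indexed by `i : Fin m`) and `W i` models the even vertex `V_{2i}`. -/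
def repMap (κ : Type*) [Field κ] {m : ℕ} [NeZero m]
    (U W : Fin m → Type*) [∀ i, AddCommGroup (U i)] [∀ i, Module κ (U i)]
    [∀ i, AddCommGroup (W i)] [∀ i, Module κ (W i)]
    (α : ∀ i, U i →ₗ[κ] W i) (β : ∀ i, U (i + 1) →ₗ[κ] W i) :
    ((∀ i, U i) →ₗ[κ] ∀ i, W i) :=
  LinearMap.pi fun i => (α i).comp (LinearMap.proj i) - (β i).comp (LinearMap.proj (i + 1))

/-- The `k × k` Jordan matrix `T(λ,k)` with eigenvalue `λ` on the diagonal and `1` on the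
superdiagonal. -/
def jordanMatrix {κ : Type*} [Field κ] (lam : κ) (k : ℕ) : Matrix (Fin k) (Fin k) κ :=
  fun i j => if j = i then lam else if (j : ℕ) = (i : ℕ) + 1 then 1 else 0

theorem LinearMap.finrank_quotient_range_eq_finrank_ker {K V V₂ : Type*} [DivisionRing K]
    [AddCommGroup V] [Module K V] [AddCommGroup V₂] [Module K V₂]
    [FiniteDimensional K V] [FiniteDimensional K V₂]
    (H : Module.finrank K V = Module.finrank K V₂) (f : V →ₗ[K] V₂) :
    Module.finrank K (V₂ ⧸ LinearMap.range f) = Module.finrank K (LinearMap.ker f) := by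
  have := (LinearMap.range f).finrank_quotient_add_finrank
  have := f.finrank_range_add_finrank_ker
  omega

open Fin.NatCast in
theorem Fin.apply_eq_apply_zero_of_apply_eq_apply_add_one {X : Type*} {m : ℕ} [NeZero m]
    {v : Fin m → X} (h : ∀ i ≠ 0, v i = v (i + 1)) (i : Fin m) : v i = v 0 := by
  -- walk backwards from `0` along the cycle
  have key : ∀ j : ℕ, v (-(j : Fin m)) = v 0 := by
    intro j
    induction j with
    | zero => simp
    | succ j ih =>
      by_cases hj : -((j + 1 : ℕ) : Fin m) = 0
      · rw [hj]
      · rw [h _ hj, Nat.cast_succ, neg_add, neg_add_cancel_right, ih]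
  simpa using key (-i).val

section Monodromy

variable (κ : Type*) [Field κ] (m : ℕ) [NeZero m] {V : Type*} [AddCommGroup V] [Module κ V]

abbrev monodromyRepMap (f : V →ₗ[κ] V) : (Fin m → V) →ₗ[κ] (Fin m → V) :=
  repMap κ (fun _ => V) (fun _ => V) (fun i => if i = 0 then f else LinearMap.id)
    (fun _ => LinearMap.id)

variable {κ m}

theorem mem_ker_monodromyRepMap_iff (f : V →ₗ[κ] V) (v : Fin m → V) :
    v ∈ LinearMap.ker (monodromyRepMap κ m f) ↔ f (v 0) = v 0 ∧ ∀ i, v i = v 0 := by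
  simp only [LinearMap.mem_ker, repMap, funext_iff, LinearMap.pi_apply, LinearMap.sub_apply,
    LinearMap.comp_apply, LinearMap.proj_apply, LinearMap.id_apply, Pi.zero_apply, sub_eq_zero]
  constructor
  · intro h
    have hconst := Fin.apply_eq_apply_zero_of_apply_eq_apply_add_one (v := v)
      fun i hi => by simpa [hi] using h i
    exact ⟨by simpa [hconst 1] using h 0, hconst⟩
  · rintro ⟨hf, hconst⟩ i
    split_ifs <;> simp [hconst, hf]

def kerMonodromyRepMapEquiv (f : V →ₗ[κ] V) :
    LinearMap.ker (monodromyRepMap κ m f) ≃ₗ[κ] LinearMap.ker (f - LinearMap.id) where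
  toFun v := ⟨v.1 0, sub_eq_zero.2 ((mem_ker_monodromyRepMap_iff f v.1).1 v.2).1⟩
  map_add' _ _ := rfl
  map_smul' _ _ := rfl
  invFun x := ⟨fun _ => x.1, (mem_ker_monodromyRepMap_iff f _).2
    ⟨sub_eq_zero.1 (LinearMap.mem_ker.1 x.2), fun _ => rfl⟩⟩
  left_inv v := Subtype.ext (funext fun i => ((mem_ker_monodromyRepMap_iff f v.1).1 v.2).2 i).symm
  right_inv _ := rfl

end Monodromy

section Jordan

variable {κ : Type*} [Field κ]

theorem jordanMatrix_sub_one (lam : κ) (k : ℕ) :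
    jordanMatrix lam k - 1 = jordanMatrix (lam - 1) k := by
  ext i j
  rcases eq_or_ne j i with rfl | hji
  · simp [jordanMatrix]
  · simp [jordanMatrix, hji, Ne.symm hji]

theorem det_jordanMatrix (lam : κ) (k : ℕ) : (jordanMatrix lam k).det = lam ^ k := by
  have hupper : (jordanMatrix lam k).IsUpperTriangular := by
    intro i j (hji : j < i)
    simp only [jordanMatrix]
    rw [if_neg hji.ne, if_neg (by omega)]
  simp [Matrix.det_of_isUpperTriangular hupper, jordanMatrix]

theorem jordanMatrix_zero_apply (k : ℕ) (i j : Fin k) :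
    jordanMatrix (0 : κ) k i j = if (j : ℕ) = i + 1 then 1 else 0 := by
  unfold jordanMatrix
  split_ifs <;> first | rfl | omega

theorem mem_ker_mulVecLin_jordanMatrix_zero_iff {k : ℕ} (x : Fin k → κ) :
    x ∈ LinearMap.ker (jordanMatrix (0 : κ) k).mulVecLin ↔
      ∀ j : Fin k, (j : ℕ) ≠ 0 → x j = 0 := by
  simp only [LinearMap.mem_ker, Matrix.mulVecLin_apply, funext_iff, Matrix.mulVec, dotProduct,
    jordanMatrix_zero_apply, ite_mul, one_mul, zero_mul, Pi.zero_apply]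
  constructor
  · intro h j hj
    rw [← h ⟨j - 1, by omega⟩, Finset.sum_eq_single j (fun j' _ hj' => if_neg ?_) (by simp)]
    · rw [if_pos (by simp; omega)]
    · exact fun h => hj' (Fin.ext (by simp at h; omega))
  · intro h i
    exact Finset.sum_eq_zero fun j _ => by split_ifs <;> simp_all

theorem ker_mulVecLin_jordanMatrix_zero {k : ℕ} (hk : 0 < k) :
    LinearMap.ker (jordanMatrix (0 : κ) k).mulVecLin = κ ∙ Pi.single ⟨0, hk⟩ 1 := by
  ext x
  rw [mem_ker_mulVecLin_jordanMatrix_zero_iff, Submodule.mem_span_singleton]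
  constructor
  · intro h
    refine ⟨x ⟨0, hk⟩, funext fun j => ?_⟩
    by_cases hj : (j : ℕ) = 0
    · obtain rfl : j = ⟨0, hk⟩ := Fin.ext hj
      simp
    · simp [Fin.ext_iff, hj, h j hj]
  · rintro ⟨a, rfl⟩ j hj
    simp [Fin.ext_iff, hj]

theorem finrank_ker_mulVecLin_jordanMatrix [DecidableEq κ] (lam : κ) {k : ℕ} (hk : 0 < k) :
    Module.finrank κ (LinearMap.ker (jordanMatrix lam k).mulVecLin) =
      if lam = 0 then 1 else 0 := by
  split_ifs with hlam
  · rw [hlam, ker_mulVecLin_jordanMatrix_zero hk]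
    exact finrank_span_singleton (by simp)
  · have hunit : IsUnit (jordanMatrix lam k) := by
      rw [Matrix.isUnit_iff_isUnit_det, det_jordanMatrix]
      exact (pow_ne_zero k hlam).isUnit
    rw [LinearMap.ker_eq_bot.2 (by
      rw [Matrix.coe_mulVecLin]; exact Matrix.mulVec_injective_iff_isUnit.2 hunit)]
    exact finrank_bot κ _

end Jordan

theorem stmt16_general (κ : Type*) [Field κ] [DecidableEq κ] (m : ℕ) [NeZero m]
    (lam : κ) (k : ℕ) (hk : 0 < k) :
    Module.finrank κ
        (LinearMap.ker (repMap κ (fun _ : Fin m => Fin k → κ) (fun _ : Fin m => Fin k → κ)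
          (fun i => if i = 0 then (jordanMatrix lam k).mulVecLin else LinearMap.id)
          (fun _ => LinearMap.id)))
      = (if lam = 1 then 1 else 0)
    ∧ Module.finrank κ
        ((∀ _ : Fin m, Fin k → κ) ⧸
          LinearMap.range (repMap κ (fun _ : Fin m => Fin k → κ) (fun _ : Fin m => Fin k → κ)
          (fun i => if i = 0 then (jordanMatrix lam k).mulVecLin else LinearMap.id)
          (fun _ => LinearMap.id)))
      = (if lam = 1 then 1 else 0) := by
  have hsub : (jordanMatrix lam k).mulVecLin - LinearMap.id
      = (jordanMatrix (lam - 1) k).mulVecLin := by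
    rw [← jordanMatrix_sub_one]
    ext1 x
    simp
  have hker :
      Module.finrank κ (LinearMap.ker (monodromyRepMap κ m (jordanMatrix lam k).mulVecLin))
        = if lam = 1 then 1 else 0 := by
    rw [(kerMonodromyRepMapEquiv _).finrank_eq, hsub, finrank_ker_mulVecLin_jordanMatrix _ hk]
    simp only [sub_eq_zero]
  exact ⟨hker, (LinearMap.finrank_quotient_range_eq_finrank_ker rfl _).trans hker⟩

/-- For the Jordan cell `G_{2m}`-representation `ρ^{II}(λ,k)` (all vertex spaces `κ^k`,
`α₁ = T(λ,k)` the Jordan block with eigenvalue `λ ≠ 0`, all other maps the identity):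
`dim ker M = dim coker M = 1` if `λ = 1` and `= 0` otherwise. -/
theorem stmt16 (κ : Type*) [Field κ] [DecidableEq κ] (m : ℕ) [NeZero m]
    (lam : κ) (hlam : lam ≠ 0) (k : ℕ) (hk : 0 < k) :
    Module.finrank κ
        (LinearMap.ker (repMap κ (fun _ : Fin m => Fin k → κ) (fun _ : Fin m => Fin k → κ)
          (fun i => if i = 0 then (jordanMatrix lam k).mulVecLin else LinearMap.id)
          (fun _ => LinearMap.id)))
      = (if lam = 1 then 1 else 0)
    ∧ Module.finrank κ
        ((∀ _ : Fin m, Fin k → κ) ⧸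
          LinearMap.range (repMap κ (fun _ : Fin m => Fin k → κ) (fun _ : Fin m => Fin k → κ)
          (fun i => if i = 0 then (jordanMatrix lam k).mulVecLin else LinearMap.id)
          (fun _ => LinearMap.id)))
      = (if lam = 1 then 1 else 0) :=
  stmt16_general κ m lam k hk
end
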